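/- Let A, B be nonempty subsets of a normed space X and T a p-cyclic φ-contraction mapping. If (x,y) ∈ A × B satisfies ‖(x,y) − (T(x,y), T(y,x))‖ = dist(A,B), then ‖T(T(x,y), T(y,x)) − T(x,y)‖ = dist(A,B). -/

import Mathlib

open Filter Topology

/-- `setDist A B = inf {‖a - b‖ : a ∈ A, b ∈ B}`. -/
noncomputable def setDist {X : Type*} [NormedAddCommGroup X] (A B : Set X) : ℝ :=
  sInf {d : ℝ | ∃ a ∈ A, ∃ b ∈ B, d = ‖a - b‖}

theorem setDist_le_norm_sub {X : Type*} [NormedAddCommGroup X] {A B : Set X} {a b : X}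
    (ha : a ∈ A) (hb : b ∈ B) : setDist A B ≤ ‖a - b‖ :=
  csInf_le ⟨0, by rintro _ ⟨_, _, _, _, rfl⟩; exact norm_nonneg _⟩ ⟨a, ha, b, hb, rfl⟩

theorem stmt17_general {X : Type*} [NormedAddCommGroup X]
    (A B : Set X)
    (T : X → X → X) (φ : ℝ → ℝ)
    (hTB : ∀ x ∈ A, ∀ y ∈ B, T x y ∈ B)
    (hTA : ∀ x ∈ B, ∀ y ∈ A, T x y ∈ A)
    (hT : ∀ x₁ ∈ A, ∀ y₁ ∈ B, ∀ x₂ ∈ B, ∀ y₂ ∈ A,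
      ‖T x₁ y₁ - T x₂ y₂‖ ≤ ‖((x₁, y₁) : X × X) - (x₂, y₂)‖
        - φ ‖((x₁, y₁) : X × X) - (x₂, y₂)‖ + φ (setDist A B))
    (x' y' : X) (hx' : x' ∈ A) (hy' : y' ∈ B)
    (h : ‖((x', y') : X × X) - (T x' y', T y' x')‖ = setDist A B) :
    ‖T (T x' y') (T y' x') - T x' y'‖ = setDist A B := by
  have hu : T x' y' ∈ B := hTB x' hx' y' hy'
  have hv : T y' x' ∈ A := hTA y' hy' x' hx'
  -- at a pair realising `dist(A, B)` the two `φ`-terms of the contraction cancel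
  have upper : ‖T x' y' - T (T x' y') (T y' x')‖ ≤ setDist A B := by
    simpa only [h, sub_add_cancel] using hT x' hx' y' hy' _ hu _ hv
  rw [norm_sub_rev] at upper
  exact le_antisymm upper (setDist_le_norm_sub (hTA _ hu _ hv) hu)

theorem stmt17 {X : Type*} [NormedAddCommGroup X] [NormedSpace ℝ X]
    (A B : Set X) (hA : A.Nonempty) (hB : B.Nonempty)
    (T : X → X → X) (φ : ℝ → ℝ)
    (hφmono : StrictMonoOn φ (Set.Ici 0)) (hφpos : ∀ t ≥ (0:ℝ), 0 ≤ φ t)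
    (hTB : ∀ x ∈ A, ∀ y ∈ B, T x y ∈ B)
    (hTA : ∀ x ∈ B, ∀ y ∈ A, T x y ∈ A)
    (hT : ∀ x₁ ∈ A, ∀ y₁ ∈ B, ∀ x₂ ∈ B, ∀ y₂ ∈ A,
      ‖T x₁ y₁ - T x₂ y₂‖ ≤ ‖((x₁, y₁) : X × X) - (x₂, y₂)‖
        - φ ‖((x₁, y₁) : X × X) - (x₂, y₂)‖ + φ (setDist A B))
    (x' y' : X) (hx' : x' ∈ A) (hy' : y' ∈ B)
    (h : ‖((x', y') : X × X) - (T x' y', T y' x')‖ = setDist A B) :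
    ‖T (T x' y') (T y' x') - T x' y'‖ = setDist A B :=
  stmt17_general A B T φ hTB hTA hT x' y' hx' hy' h
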